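/- arXiv:2004.11100 — 3 statements merged into one kernel-verified Lean document; each statement's English description precedes it below -/
import Mathlib

section
/- Let λ > 0 with θ_λ ∈ (0, π/2) defined by tan θ_λ = 1/λ. Let μ_L, μ_D : (0, θ_λ] → [0, ∞) be continuously differentiable, non-negative and non-decreasing, with M := sup_{(0,θ_λ]} μ_L' < ∞, M_D := sup_{(0,θ_λ]} μ_D' < ∞ and m' := inf_{(0,θ_λ]} μ_L'; assume tan θ_λ · (1 + M_D) < m' and D(φ) := max{0, −μ_G'(φ)} + M + (1 + tan² θ_λ) μ_D(φ) > 0 for all φ ∈ (0, θ_λ]. Fix ε ∈ (0, 1), set ρ_ε(φ) := ε/D(φ) and f(φ) := φ + ρ_ε(φ)(μ_G(φ) − μ_L(φ) + tan(θ_λ − φ) μ_D(φ)); suppose {φ ∈ (0, θ_λ] : μ_L(φ) − tan(θ_λ − φ) μ_D(φ) = μ_G(φ)} is non-empty with maximum φ*, and define φ⁰ = θ_λ, φ^{k+1} = f(φ^k). Then with C := 1 − ε (m' − tan θ_λ (1 + M_D)) / (M + sin θ_λ + (1 + tan² θ_λ) μ_D(θ_λ)), one has C ∈ [0, 1) and |φ^k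 − φ*| ≤ C^k (θ_λ − φ*) for all k ∈ ℕ. -/
/-
Write `g φ = μ_L φ - tan (θ - φ) μ_D φ - μ_G φ` (`muResidual`), so that `g φ* = 0` and the iteration reads
`φ ↦ φ - ε g(φ) / D(φ)`. Since `μ_G'' φ = -sin φ tan (θ - φ) - 2 cos θ / cos³ (θ - φ) ≤ 0`,
`μ_G'` decreases on `[0, θ]` from `tan θ` to `-sin θ`. Hence `c := m' - tan θ (1 + M_D) ≤ g'`
and `g' ξ ≤ D φ ≤ M + sin θ + (1 + tan² θ) μ_D θ` for `ξ ≤ φ`; by the mean value theorem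
`c (φ - φ*) ≤ g φ ≤ D φ (φ - φ*)` on `[φ*, θ]`. So every step stays in `[φ*, θ]` and shrinks
`φ - φ*` at least by the factor `1 - ε c / D(φ) ≤ C`.
-/

open Real Set

/-- The macroscopic function `μ_G(φ) = sin φ · tan (θ − φ)`. -/
noncomputable def muG (θ φ : ℝ) : ℝ := Real.sin φ * Real.tan (θ - φ)

/-- The derivative of `μ_G`: `μ_G'(φ) = cos φ · tan(θ − φ) − sin φ / cos²(θ − φ)`. -/
noncomputable def muGderiv (θ φ : ℝ) : ℝ :=
  Real.cos φ * Real.tan (θ - φ) - Real.sin φ / Real.cos (θ - φ) ^ 2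

lemma HasDerivAt.nonneg_of_monotoneOn_Ioc {f : ℝ → ℝ} {f' a b x : ℝ}
    (hd : HasDerivAt f f' x) (hf : MonotoneOn f (Ioc a b)) (hx : x ∈ Ioc a b) : 0 ≤ f' := by
  have hacc : AccPt x (Filter.principal (Ioc a x)) := by
    rw [accPt_principal_iff_nhdsWithin, Ioc_sdiff_right]
    exact right_nhdsWithin_Ioo_neBot hx.1
  exact hd.hasDerivWithinAt.nonneg_of_monotoneOn hacc (hf.mono (Ioc_subset_Ioc_right hx.2))

section muG

variable {θ φ : ℝ}

lemma cos_sub_pos_of_mem_Icc (hθ : θ < π / 2) (hφ : φ ∈ Icc 0 θ) : 0 < cos (θ - φ) :=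
  cos_pos_of_mem_Ioo ⟨by linarith [pi_pos, hφ.2], by linarith [hφ.1]⟩

lemma hasDerivAt_tan_const_sub (h : cos (θ - φ) ≠ 0) :
    HasDerivAt (fun x => tan (θ - x)) (-(1 / cos (θ - φ) ^ 2)) φ :=
  ((hasDerivAt_tan h).comp φ ((hasDerivAt_id' φ).const_sub θ)).congr_deriv (by ring)

lemma hasDerivAt_muG (h : cos (θ - φ) ≠ 0) : HasDerivAt (muG θ) (muGderiv θ φ) φ :=
  ((hasDerivAt_sin φ).mul (hasDerivAt_tan_const_sub h)).congr_deriv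
    (by rw [muGderiv]; ring)

lemma hasDerivAt_muGderiv (h : cos (θ - φ) ≠ 0) :
    HasDerivAt (muGderiv θ) (-sin φ * tan (θ - φ) - 2 * cos θ / cos (θ - φ) ^ 3) φ := by
  have hcos_sq : HasDerivAt (fun x => cos (θ - x) ^ 2) (2 * cos (θ - φ) * sin (θ - φ)) φ :=
    (((hasDerivAt_cos (θ - φ)).comp φ ((hasDerivAt_id' φ).const_sub θ)).pow 2).congr_deriv
      (by simp only [Function.comp_apply]; ring)
  refine (((hasDerivAt_cos φ).mul (hasDerivAt_tan_const_sub h)).sub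
    ((hasDerivAt_sin φ).div hcos_sq (pow_ne_zero 2 h))).congr_deriv ?_
  have hcosθ : cos θ = cos φ * cos (θ - φ) - sin φ * sin (θ - φ) := by
    rw [← cos_add, add_sub_cancel]
  rw [hcosθ]
  field_simp
  ring

lemma antitoneOn_muGderiv (hθ : θ < π / 2) : AntitoneOn (muGderiv θ) (Icc 0 θ) := by
  have hcos : ∀ x ∈ Icc 0 θ, 0 < cos (θ - x) := fun x hx => cos_sub_pos_of_mem_Icc hθ hx
  refine antitoneOn_of_hasDerivWithinAt_nonpos (convex_Icc 0 θ)
    (fun x hx => (hasDerivAt_muGderiv (hcos x hx).ne').continuousAt.continuousWithinAt)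
    (fun x hx => (hasDerivAt_muGderiv
      (hcos x (interior_subset hx)).ne').hasDerivWithinAt) fun x hx => ?_
  rw [interior_Icc] at hx
  have hsin : 0 ≤ sin x := sin_nonneg_of_nonneg_of_le_pi hx.1.le (by linarith [pi_pos, hx.2])
  have htan : 0 ≤ tan (θ - x) :=
    tan_nonneg_of_nonneg_of_le_pi_div_two (by linarith [hx.2]) (by linarith [hx.1])
  have hcosθ : 0 ≤ cos θ := cos_nonneg_of_mem_Icc ⟨by linarith [pi_pos, hx.1, hx.2], hθ.le⟩
  have := hcos x (Ioo_subset_Icc_self hx)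
  have : 0 ≤ 2 * cos θ / cos (θ - x) ^ 3 := by positivity
  nlinarith [mul_nonneg hsin htan]

lemma muGderiv_le_tan (hθ : θ < π / 2) (hφ : φ ∈ Icc 0 θ) : muGderiv θ φ ≤ tan θ := by
  simpa [muGderiv] using antitoneOn_muGderiv hθ ⟨le_rfl, hφ.1.trans hφ.2⟩ hφ hφ.1

lemma neg_muGderiv_le_sin (hθ : θ < π / 2) (hφ : φ ∈ Icc 0 θ) : -muGderiv θ φ ≤ sin θ := by
  have := antitoneOn_muGderiv hθ hφ ⟨hφ.1.trans hφ.2, le_rfl⟩ hφ.2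
  simp only [muGderiv, sub_self, tan_zero, mul_zero, cos_zero, one_pow, div_one] at this ⊢
  linarith

lemma one_div_cos_sub_sq_le (hθ : θ < π / 2) (hφ : φ ∈ Icc 0 θ) :
    1 / cos (θ - φ) ^ 2 ≤ 1 + tan θ ^ 2 := by
  have hθ0 : 0 < cos θ := cos_pos_of_mem_Ioo ⟨by linarith [pi_pos, hφ.1, hφ.2], hθ⟩
  have hle : cos θ ≤ cos (θ - φ) :=
    cos_le_cos_of_nonneg_of_le_pi (by linarith [hφ.2]) (by linarith [pi_pos]) (by linarith [hφ.1])
  rw [← inv_inv (1 + tan θ ^ 2), inv_one_add_tan_sq hθ0.ne', one_div]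
  gcongr

end muG

section DampedIteration

variable {g D : ℝ → ℝ} {a b c K ε : ℝ}

lemma damped_step_bounds (hε : ε ∈ Ioc 0 1) (hc : 0 ≤ c) {y : ℝ} (hy : a ≤ y)
    (hD : 0 < D y) (hDK : D y ≤ K) (hg : c * (y - a) ≤ g y ∧ g y ≤ D y * (y - a)) :
    a ≤ y - ε / D y * g y ∧ y - ε / D y * g y ≤ y ∧
      y - ε / D y * g y - a ≤ (1 - ε * c / K) * (y - a) := by
  have hρ : 0 ≤ ε / D y := div_nonneg hε.1.le hD.le
  have hstep_le : ε / D y * g y ≤ ε * (y - a) :=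
    calc ε / D y * g y ≤ ε / D y * (D y * (y - a)) := mul_le_mul_of_nonneg_left hg.2 hρ
      _ = ε * (y - a) := by field_simp
  have hstep_ge : ε * c / K * (y - a) ≤ ε / D y * g y :=
    calc ε * c / K * (y - a) = ε / K * (c * (y - a)) := by ring
      _ ≤ ε / D y * g y :=
        mul_le_mul (div_le_div_of_nonneg_left hε.1.le hD hDK) hg.1
          (mul_nonneg hc (sub_nonneg.2 hy)) hρ
  have hstep_nonneg : 0 ≤ ε / D y * g y :=
    mul_nonneg hρ ((mul_nonneg hc (sub_nonneg.2 hy)).trans hg.1)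
  have hε_mul : ε * (y - a) ≤ y - a := mul_le_of_le_one_left (sub_nonneg.2 hy) hε.2
  exact ⟨by linarith, by linarith, by linarith⟩

lemma one_sub_mul_div_mem_Ico (hε : ε ∈ Ioc 0 1) (hc : 0 < c) (hcK : c ≤ K) :
    1 - ε * c / K ∈ Ico 0 1 := by
  have hK : 0 < K := hc.trans_le hcK
  refine ⟨sub_nonneg.2 ((div_le_one hK).2 ?_), sub_lt_self _ (div_pos (mul_pos hε.1 hc) hK)⟩
  calc ε * c ≤ 1 * c := mul_le_mul_of_nonneg_right hε.2 hc.le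
    _ ≤ K := by rwa [one_mul]

theorem damped_iteration_rate (hε : ε ∈ Ioc 0 1) (hc : 0 < c) (hcK : c ≤ K) (hab : a ≤ b)
    (hD : ∀ y ∈ Icc a b, 0 < D y ∧ D y ≤ K)
    (hg : ∀ y ∈ Icc a b, c * (y - a) ≤ g y ∧ g y ≤ D y * (y - a))
    (x : ℕ → ℝ) (hx0 : x 0 = b)
    (hx : ∀ k, x (k + 1) = x k - ε / D (x k) * g (x k)) (k : ℕ) :
    x k ∈ Icc a b ∧ x k - a ≤ (1 - ε * c / K) ^ k * (b - a) := by
  have hq : 0 ≤ 1 - ε * c / K := (one_sub_mul_div_mem_Ico hε hc hcK).1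
  induction k with
  | zero => simp [hx0, hab]
  | succ k ih =>
    obtain ⟨hxk, hrate⟩ := ih
    obtain ⟨hlow, hdec, hcontr⟩ :=
      damped_step_bounds hε hc.le hxk.1 (hD _ hxk).1 (hD _ hxk).2 (hg _ hxk)
    rw [hx k]
    refine ⟨⟨hlow, hdec.trans hxk.2⟩, hcontr.trans ?_⟩
    rw [pow_succ', mul_assoc]
    exact mul_le_mul_of_nonneg_left hrate hq

end DampedIteration

section Residual

variable {θ : ℝ} {μL μD : ℝ → ℝ}

noncomputable def muResidual (θ : ℝ) (μL μD : ℝ → ℝ) (φ : ℝ) : ℝ :=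
  μL φ - tan (θ - φ) * μD φ - muG θ φ

/-- The paper's `D(φ)`, so that the iteration step is `ρ_ε = ε / stepDenom`. -/
noncomputable def stepDenom (θ M : ℝ) (μD : ℝ → ℝ) (φ : ℝ) : ℝ :=
  max 0 (-muGderiv θ φ) + M + (1 + tan θ ^ 2) * μD φ

lemma hasDerivAt_muResidual {φ l d : ℝ} (hL : HasDerivAt μL l φ) (hD : HasDerivAt μD d φ)
    (hcos : cos (θ - φ) ≠ 0) :
    HasDerivAt (muResidual θ μL μD)
      (l + μD φ / cos (θ - φ) ^ 2 - tan (θ - φ) * d - muGderiv θ φ) φ :=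
  ((hL.sub ((hasDerivAt_tan_const_sub hcos).mul hD)).sub (hasDerivAt_muG hcos)).congr_deriv
    (by ring)

lemma le_deriv_muResidual {m' MD ξ l d : ℝ} (hθ : θ < π / 2) (hξ : ξ ∈ Icc 0 θ)
    (hL : HasDerivAt μL l ξ) (hD : HasDerivAt μD d ξ) (hl : m' ≤ l) (hd : d ∈ Icc 0 MD)
    (hμD : 0 ≤ μD ξ) :
    m' - tan θ * (1 + MD) ≤ deriv (muResidual θ μL μD) ξ := by
  have hcos := cos_sub_pos_of_mem_Icc hθ hξ
  rw [(hasDerivAt_muResidual hL hD hcos.ne').deriv]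
  have htan : tan (θ - ξ) ≤ tan θ :=
    strictMonoOn_tan.monotoneOn ⟨by linarith [pi_pos, hξ.2], by linarith [hξ.1]⟩
      ⟨by linarith [pi_pos, hξ.1, hξ.2], hθ⟩ (by linarith [hξ.1])
  have htan_mul : tan (θ - ξ) * d ≤ tan θ * MD :=
    mul_le_mul htan hd.2 hd.1 (tan_nonneg_of_nonneg_of_le_pi_div_two (hξ.1.trans hξ.2) hθ.le)
  have : 0 ≤ μD ξ / cos (θ - ξ) ^ 2 := by positivity
  linarith [muGderiv_le_tan hθ hξ]

lemma deriv_muResidual_le_stepDenom {M ξ φ l d : ℝ} (hθ : θ < π / 2) (hξ : ξ ∈ Icc 0 θ)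
    (hφ : φ ∈ Icc ξ θ) (hL : HasDerivAt μL l ξ) (hD : HasDerivAt μD d ξ) (hl : l ≤ M)
    (hd : 0 ≤ d) (hμD : 0 ≤ μD ξ) (hμD_le : μD ξ ≤ μD φ) :
    deriv (muResidual θ μL μD) ξ ≤ stepDenom θ M μD φ := by
  have hcos := cos_sub_pos_of_mem_Icc hθ hξ
  rw [(hasDerivAt_muResidual hL hD hcos.ne').deriv, stepDenom]
  have hsec : μD ξ / cos (θ - ξ) ^ 2 ≤ (1 + tan θ ^ 2) * μD φ :=
    calc μD ξ / cos (θ - ξ) ^ 2 = 1 / cos (θ - ξ) ^ 2 * μD ξ := by ring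
      _ ≤ (1 + tan θ ^ 2) * μD φ :=
        mul_le_mul (one_div_cos_sub_sq_le hθ hξ) hμD_le hμD (by positivity)
  have htan_mul : 0 ≤ tan (θ - ξ) * d :=
    mul_nonneg (tan_nonneg_of_nonneg_of_le_pi_div_two (by linarith [hξ.2])
      (by linarith [hξ.1])) hd
  have hanti : muGderiv θ φ ≤ muGderiv θ ξ :=
    antitoneOn_muGderiv hθ hξ ⟨hξ.1.trans hφ.1, hφ.2⟩ hφ.1
  linarith [le_max_right 0 (-muGderiv θ φ)]

lemma stepDenom_le {M φ : ℝ} (hθ : θ < π / 2) (hφ : φ ∈ Icc 0 θ) (hμD : μD φ ≤ μD θ) :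
    stepDenom θ M μD φ ≤ M + sin θ + (1 + tan θ ^ 2) * μD θ := by
  have hsin : 0 ≤ sin θ :=
    sin_nonneg_of_nonneg_of_le_pi (hφ.1.trans hφ.2) (by linarith [pi_pos])
  have : max 0 (-muGderiv θ φ) ≤ sin θ := max_le hsin (neg_muGderiv_le_sin hθ hφ)
  have : (1 + tan θ ^ 2) * μD φ ≤ (1 + tan θ ^ 2) * μD θ := by gcongr
  rw [stepDenom]
  linarith

lemma stepDenom_pos {M φ : ℝ} (hM : 0 < M) (hμD : 0 ≤ μD φ) : 0 < stepDenom θ M μD φ := by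
  rw [stepDenom]
  have := le_max_left 0 (-muGderiv θ φ)
  positivity

lemma muResidual_bounds {M MD m' φs y : ℝ} {μL' μD' : ℝ → ℝ} (hθ : θ < π / 2)
    (hμLd : ∀ φ ∈ Ioc 0 θ, HasDerivAt μL (μL' φ) φ)
    (hμDd : ∀ φ ∈ Ioc 0 θ, HasDerivAt μD (μD' φ) φ)
    (hμL' : ∀ φ ∈ Ioc 0 θ, μL' φ ∈ Icc m' M) (hμD' : ∀ φ ∈ Ioc 0 θ, μD' φ ∈ Icc 0 MD)
    (hμDnn : ∀ φ ∈ Ioc 0 θ, 0 ≤ μD φ) (hμDmono : MonotoneOn μD (Ioc 0 θ))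
    (hφs : φs ∈ Ioc 0 θ) (hzero : muResidual θ μL μD φs = 0) (hy : y ∈ Icc φs θ) :
    (m' - tan θ * (1 + MD)) * (y - φs) ≤ muResidual θ μL μD y ∧
      muResidual θ μL μD y ≤ stepDenom θ M μD y * (y - φs) := by
  have hsub : Icc φs y ⊆ Ioc 0 θ := fun ξ hξ => ⟨hφs.1.trans_le hξ.1, hξ.2.trans hy.2⟩
  have hdiff : ∀ ξ ∈ Icc φs y, DifferentiableAt ℝ (muResidual θ μL μD) ξ := fun ξ hξ =>
    (hasDerivAt_muResidual (hμLd ξ (hsub hξ)) (hμDd ξ (hsub hξ))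
      (cos_sub_pos_of_mem_Icc hθ (Ioc_subset_Icc_self (hsub hξ))).ne').differentiableAt
  have hcont : ContinuousOn (muResidual θ μL μD) (Icc φs y) := fun ξ hξ =>
    (hdiff ξ hξ).continuousAt.continuousWithinAt
  have hdiffOn : DifferentiableOn ℝ (muResidual θ μL μD) (interior (Icc φs y)) := fun ξ hξ =>
    (hdiff ξ (interior_subset hξ)).differentiableWithinAt
  have hφs_mem : φs ∈ Icc φs y := ⟨le_rfl, hy.1⟩
  have hy_mem : y ∈ Icc φs y := ⟨hy.1, le_rfl⟩
  constructor
  · have := (convex_Icc φs y).mul_sub_le_image_sub_of_le_deriv hcont hdiffOn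
      (fun ξ hξ => by
        have hξθ := hsub (interior_subset hξ)
        exact le_deriv_muResidual hθ (Ioc_subset_Icc_self hξθ) (hμLd ξ hξθ) (hμDd ξ hξθ)
          (hμL' ξ hξθ).1 (hμD' ξ hξθ) (hμDnn ξ hξθ))
      φs hφs_mem y hy_mem hy.1
    rwa [hzero, sub_zero] at this
  · have := (convex_Icc φs y).image_sub_le_mul_sub_of_deriv_le hcont hdiffOn
      (fun ξ hξ => by
        have hξy := interior_subset hξ
        have hξθ := hsub hξy
        exact deriv_muResidual_le_stepDenom hθ (Ioc_subset_Icc_self hξθ) ⟨hξy.2, hy.2⟩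
          (hμLd ξ hξθ) (hμDd ξ hξθ) (hμL' ξ hξθ).2 (hμD' ξ hξθ).1 (hμDnn ξ hξθ)
          (hμDmono hξθ (hsub hy_mem) hξy.2))
      φs hφs_mem y hy_mem hy.1
    rwa [hzero, sub_zero] at this

end Residual

theorem bem_fixed_point_rate_general
    (θ : ℝ) (hθ : θ ∈ Ioo 0 (π / 2))
    (μL μD μL' μD' : ℝ → ℝ)
    (hμLd : ∀ φ ∈ Ioc 0 θ, HasDerivAt μL (μL' φ) φ)
    (hμDd : ∀ φ ∈ Ioc 0 θ, HasDerivAt μD (μD' φ) φ)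
    (hμDnn : ∀ φ ∈ Ioc 0 θ, 0 ≤ μD φ)
    (hμDmono : MonotoneOn μD (Ioc 0 θ))
    (M MD m' : ℝ)
    (hM : IsLUB (μL' '' Ioc 0 θ) M)
    (hMD : IsLUB (μD' '' Ioc 0 θ) MD)
    (hm' : IsGLB (μL' '' Ioc 0 θ) m')
    (hcond : Real.tan θ * (1 + MD) < m')
    (ε : ℝ) (hε : ε ∈ Ioo (0 : ℝ) 1)
    (seq : ℕ → ℝ) (hseq0 : seq 0 = θ)
    (hseqrec : ∀ k : ℕ, seq (k + 1)
      = seq k +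
        (ε / (max 0 (-(muGderiv θ (seq k))) + M + (1 + Real.tan θ ^ 2) * μD (seq k))) *
          (muG θ (seq k) - μL (seq k) + Real.tan (θ - seq k) * μD (seq k)))
    (φs : ℝ)
    (hφs : IsGreatest {φ ∈ Ioc 0 θ | μL φ - Real.tan (θ - φ) * μD φ = muG θ φ} φs) :
    (1 - ε * (m' - Real.tan θ * (1 + MD)) /
        (M + Real.sin θ + (1 + Real.tan θ ^ 2) * μD θ)) ∈ Ico (0 : ℝ) 1 ∧
    ∀ k : ℕ, |seq k - φs| ≤
      (1 - ε * (m' - Real.tan θ * (1 + MD)) /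
        (M + Real.sin θ + (1 + Real.tan θ ^ 2) * μD θ)) ^ k * (θ - φs) := by
  have hθθ : θ ∈ Ioc 0 θ := ⟨hθ.1, le_rfl⟩
  have hμL' : ∀ φ ∈ Ioc 0 θ, μL' φ ∈ Icc m' M := fun φ hφ =>
    ⟨hm'.1 (mem_image_of_mem μL' hφ), hM.1 (mem_image_of_mem μL' hφ)⟩
  have hμD' : ∀ φ ∈ Ioc 0 θ, μD' φ ∈ Icc 0 MD := fun φ hφ =>
    ⟨(hμDd φ hφ).nonneg_of_monotoneOn_Ioc hμDmono hφ, hMD.1 (mem_image_of_mem μD' hφ)⟩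
  obtain ⟨hm'_le, hle_M⟩ := hμL' θ hθθ
  have hslack : 0 ≤ tan θ * (1 + MD) :=
    mul_nonneg (tan_pos_of_pos_of_lt_pi_div_two hθ.1 hθ.2).le
      (by linarith [(hμD' θ hθθ).1.trans (hμD' θ hθθ).2])
  have hMpos : 0 < M := by linarith
  have hcK : m' - tan θ * (1 + MD) ≤ M + sin θ + (1 + tan θ ^ 2) * μD θ := by
    have : 0 ≤ sin θ := sin_nonneg_of_nonneg_of_le_pi hθ.1.le (by linarith [hθ.2, pi_pos])
    have : 0 ≤ (1 + tan θ ^ 2) * μD θ := mul_nonneg (by positivity) (hμDnn θ hθθ)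
    linarith
  have hε' : ε ∈ Ioc 0 1 := ⟨hε.1, hε.2.le⟩
  have hc : 0 < m' - tan θ * (1 + MD) := sub_pos.2 hcond
  have hφs_mem : φs ∈ Ioc 0 θ := hφs.1.1
  have hIcc : ∀ y ∈ Icc φs θ, y ∈ Ioc 0 θ := fun y hy => ⟨hφs_mem.1.trans_le hy.1, hy.2⟩
  have hrate := damped_iteration_rate (g := muResidual θ μL μD) (D := stepDenom θ M μD)
    hε' hc hcK hφs_mem.2
    (fun y hy => ⟨stepDenom_pos hMpos (hμDnn y (hIcc y hy)),
      stepDenom_le hθ.2 (Ioc_subset_Icc_self (hIcc y hy)) (hμDmono (hIcc y hy) hθθ hy.2)⟩)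
    (fun y hy => muResidual_bounds hθ.2 hμLd hμDd hμL' hμD' hμDnn hμDmono hφs_mem
      (sub_eq_zero.2 hφs.1.2) hy)
    seq hseq0 (fun k => by rw [hseqrec k, muResidual, stepDenom]; ring)
  refine ⟨one_sub_mul_div_mem_Ico hε' hc hcK, fun k => ?_⟩
  obtain ⟨hmem, hle⟩ := hrate k
  rwa [abs_of_nonneg (sub_nonneg.2 hmem.1)]

/-- Rate of convergence of the damped fixed-point iteration: with
`C = 1 − ε (m' − tan θ (1 + M_D)) / (M + sin θ + (1 + tan²θ) μ_D(θ))` one has `C ∈ [0, 1)`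
and `|φ^k − φ*| ≤ C^k (θ − φ*)` for all `k`. -/
theorem bem_fixed_point_rate
    (lam θ : ℝ) (hlam : 0 < lam) (hθ : θ ∈ Ioo 0 (π / 2))
    (htan : Real.tan θ = 1 / lam)
    (μL μD μL' μD' : ℝ → ℝ)
    (hμLd : ∀ φ ∈ Ioc 0 θ, HasDerivAt μL (μL' φ) φ)
    (hμDd : ∀ φ ∈ Ioc 0 θ, HasDerivAt μD (μD' φ) φ)
    (hμL'c : ContinuousOn μL' (Ioc 0 θ)) (hμD'c : ContinuousOn μD' (Ioc 0 θ))
    (hμLnn : ∀ φ ∈ Ioc 0 θ, 0 ≤ μL φ) (hμDnn : ∀ φ ∈ Ioc 0 θ, 0 ≤ μD φ)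
    (hμLmono : MonotoneOn μL (Ioc 0 θ)) (hμDmono : MonotoneOn μD (Ioc 0 θ))
    (M MD m' : ℝ)
    (hM : IsLUB (μL' '' Ioc 0 θ) M)
    (hMD : IsLUB (μD' '' Ioc 0 θ) MD)
    (hm' : IsGLB (μL' '' Ioc 0 θ) m')
    (hcond : Real.tan θ * (1 + MD) < m')
    (hD : ∀ φ ∈ Ioc 0 θ,
      0 < max 0 (-(muGderiv θ φ)) + M + (1 + Real.tan θ ^ 2) * μD φ)
    (ε : ℝ) (hε : ε ∈ Ioo (0 : ℝ) 1)
    (seq : ℕ → ℝ) (hseq0 : seq 0 = θ)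
    (hseqrec : ∀ k : ℕ, seq (k + 1)
      = seq k +
        (ε / (max 0 (-(muGderiv θ (seq k))) + M + (1 + Real.tan θ ^ 2) * μD (seq k))) *
          (muG θ (seq k) - μL (seq k) + Real.tan (θ - seq k) * μD (seq k)))
    (φs : ℝ)
    (hφs : IsGreatest {φ ∈ Ioc 0 θ | μL φ - Real.tan (θ - φ) * μD φ = muG θ φ} φs) :
    (1 - ε * (m' - Real.tan θ * (1 + MD)) /
        (M + Real.sin θ + (1 + Real.tan θ ^ 2) * μD θ)) ∈ Ico (0 : ℝ) 1 ∧
    ∀ k : ℕ, |seq k - φs| ≤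
      (1 - ε * (m' - Real.tan θ * (1 + MD)) /
        (M + Real.sin θ + (1 + Real.tan θ ^ 2) * μD θ)) ^ k * (θ - φs) :=
  bem_fixed_point_rate_general θ hθ μL μD μL' μD' hμLd hμDd hμDnn hμDmono M MD m' hM hMD hm' hcond ε
    hε seq hseq0 hseqrec φs hφs
end

section
/- Let λ > 0 with θ_λ ∈ (0, π/2) defined by tan θ_λ = 1/λ, let m ∈ (0, θ_λ], let μ_L : (0, m] → ℝ be continuous, let μ_D : [0, m] → [0, ∞) be continuous, let (ψ, a_c) be a correction pair, let τ : (0, m] → [0, 1) be the map sending φ to the unique a ∈ [0, 1) satisfying E(φ, a), and define μ_G^c(φ) := μ_G(φ) + (cos θ_λ · sin² φ / cos(θ_λ − φ)) · ψ((τ(φ) − a_c)_+)/(1 − τ(φ))². Assume μ_G^c(m) ≤ μ_L(m) − tan(θ_λ − m) μ_D(m). If φ₀ ∈ (0, m] satisfies the uncorrected equation μ_L(φ₀) − tan(θ_λ − φ₀) μ_D(φ₀) = μ_G(φ₀), then there exists φ ∈ [φ₀, m] satisfying the corrected equation μ_L(φ) − tan(θ_λ − φ) μ_D(φ) = μ_G^c(φ).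 -/
open Real Set

/-- The function `g(φ) = cot φ · tan(θ − φ) + (μ_D(φ)/sin φ)(1 + cot φ · tan(θ − φ))`. -/
noncomputable def gBEM (θ : ℝ) (μD : ℝ → ℝ) (φ : ℝ) : ℝ :=
  (Real.cos φ / Real.sin φ) * Real.tan (θ - φ) +
    (μD φ / Real.sin φ) * (1 + (Real.cos φ / Real.sin φ) * Real.tan (θ - φ))

/-- The implicit equation `E(φ, a)`:
`a/(1−a) + (sin θ · sin φ / cos(θ−φ)) · ψ((a−a_c)_+)/(1−a)² = g(φ)`. -/
def EBEM (θ : ℝ) (μD ψ : ℝ → ℝ) (ac φ a : ℝ) : Prop :=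
  a / (1 - a) +
      (Real.sin θ * Real.sin φ / Real.cos (θ - φ)) * ψ (max (a - ac) 0) / (1 - a) ^ 2
    = gBEM θ μD φ

/-- The corrected macroscopic function
`μ_G^c(φ) = μ_G(φ) + (cos θ · sin²φ / cos(θ−φ)) · ψ((τ(φ)−a_c)_+)/(1−τ(φ))²`. -/
noncomputable def muGc (θ : ℝ) (ψ : ℝ → ℝ) (ac : ℝ) (τ : ℝ → ℝ) (φ : ℝ) : ℝ :=
  Real.sin φ * Real.tan (θ - φ) +
    (Real.cos θ * Real.sin φ ^ 2 / Real.cos (θ - φ)) * ψ (max (τ φ - ac) 0) / (1 - τ φ) ^ 2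

/-! For fixed `φ`, the left-hand side of `E(φ, ·)` is strictly increasing on `[0, 1)` and depends
continuously on `φ`, so its root `τ` is continuous; hence
`F(φ) = μ_L(φ) − tan(θ − φ) μ_D(φ) − μ_G^c(φ)` is continuous on `[φ₀, m]`. The correction term in
`μ_G^c` is nonnegative, so `F(φ₀) ≤ 0`, while `F(m) ≥ 0` is the boundary condition; the
intermediate value theorem gives the zero. -/

open Filter Topology

section Implicit

variable {α β γ : Type*} [TopologicalSpace α] [LinearOrder β] [LinearOrder γ]
  [TopologicalSpace γ] [OrderClosedTopology γ] {s : Set α} {x₀ : α} {I : Set β}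
  {L : α → β → γ} {g : α → γ} {τ : α → β}

theorem eventually_lt_of_strictMonoOn_apply_eq
    (hI : I.OrdConnected) (hL : ∀ x ∈ s, StrictMonoOn (L x) I) (hτI : ∀ x ∈ s, τ x ∈ I)
    (hτ : ∀ x ∈ s, L x (τ x) = g x) (hLc : ∀ a ∈ I, ContinuousWithinAt (L · a) s x₀)
    (hgc : ContinuousWithinAt g s x₀) (hx₀ : x₀ ∈ s) {b : β} (hb : τ x₀ < b) :
    ∀ᶠ x in 𝓝[s] x₀, τ x < b := by
  by_cases hgap : ∃ c ∈ I, τ x₀ < c ∧ c ≤ b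
  · obtain ⟨c, hcI, hτc, hcb⟩ := hgap
    have hgL : g x₀ < L x₀ c := hτ x₀ hx₀ ▸ hL x₀ hx₀ (hτI x₀ hx₀) hcI hτc
    filter_upwards [hgc.eventually_lt (hLc c hcI) hgL, self_mem_nhdsWithin] with x hx hxs
    rw [← hτ x hxs, (hL x hxs).lt_iff_lt (hτI x hxs) hcI] at hx
    exact hx.trans_le hcb
  · filter_upwards [self_mem_nhdsWithin] with x hxs
    by_contra! hbτ
    exact hgap ⟨b, hI.out (hτI x₀ hx₀) (hτI x hxs) ⟨hb.le, hbτ⟩, hb, le_rfl⟩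

theorem continuousWithinAt_of_strictMonoOn_apply_eq [TopologicalSpace β] [OrderTopology β]
    (hI : I.OrdConnected) (hL : ∀ x ∈ s, StrictMonoOn (L x) I) (hτI : ∀ x ∈ s, τ x ∈ I)
    (hτ : ∀ x ∈ s, L x (τ x) = g x) (hLc : ∀ a ∈ I, ContinuousWithinAt (L · a) s x₀)
    (hgc : ContinuousWithinAt g s x₀) (hx₀ : x₀ ∈ s) :
    ContinuousWithinAt τ s x₀ := by
  refine tendsto_order.2 ⟨fun b hb => ?_, fun b hb =>
    eventually_lt_of_strictMonoOn_apply_eq hI hL hτI hτ hLc hgc hx₀ hb⟩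
  exact eventually_lt_of_strictMonoOn_apply_eq (β := βᵒᵈ) (γ := γᵒᵈ) hI.dual
    (fun x hx => (hL x hx).dual) hτI hτ hLc hgc hx₀ hb

end Implicit

/-- `EBEM θ μD ψ ac φ a` unfolds to `bemLhs (sin θ * sin φ / cos (θ - φ)) ψ ac a = gBEM θ μD φ`. -/
noncomputable def bemLhs (c : ℝ) (ψ : ℝ → ℝ) (ac a : ℝ) : ℝ :=
  a / (1 - a) + c * ψ (max (a - ac) 0) / (1 - a) ^ 2

theorem strictMonoOn_bemLhs {c : ℝ} (hc : 0 ≤ c) {ψ : ℝ → ℝ} (hψmono : MonotoneOn ψ (Ici 0))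
    (hψnn : ∀ x ∈ Ici (0 : ℝ), 0 ≤ ψ x) (ac : ℝ) : StrictMonoOn (bemLhs c ψ ac) (Ico 0 1) := by
  intro a ⟨ha0, _⟩ b ⟨_, hb1⟩ hab
  have h1a : 0 < 1 - a := by linarith
  have h1b : 0 < 1 - b := by linarith
  have hψa : 0 ≤ ψ (max (a - ac) 0) := hψnn _ (mem_Ici.2 (le_max_right _ _))
  have hψab : ψ (max (a - ac) 0) ≤ ψ (max (b - ac) 0) :=
    hψmono (mem_Ici.2 (le_max_right _ _)) (mem_Ici.2 (le_max_right _ _))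
      (max_le_max (by linarith) le_rfl)
  have hfirst : a / (1 - a) < b / (1 - b) := by
    rw [div_lt_div_iff₀ h1a h1b]; nlinarith
  have hsecond : c * ψ (max (a - ac) 0) / (1 - a) ^ 2 ≤ c * ψ (max (b - ac) 0) / (1 - b) ^ 2 :=
    div_le_div₀ (mul_nonneg hc (hψa.trans hψab)) (mul_le_mul_of_nonneg_left hψab hc)
      (by positivity) (pow_le_pow_left₀ h1b.le (by linarith) 2)
  exact add_lt_add_of_lt_of_le hfirst hsecond

theorem sin_pos_of_mem_Ioc {θ φ : ℝ} (hθ : θ < π / 2) (hφ : φ ∈ Ioc 0 θ) : 0 < sin φ :=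
  sin_pos_of_pos_of_lt_pi hφ.1 (by linarith [pi_pos, hφ.2])

theorem cos_sub_pos_of_mem_Ioc {θ φ : ℝ} (hθ : θ < π / 2) (hφ : φ ∈ Ioc 0 θ) :
    0 < cos (θ - φ) :=
  cos_pos_of_mem_Ioo ⟨by linarith [pi_pos, hφ.2], by linarith [hφ.1]⟩

theorem continuousOn_tan_const_sub {θ : ℝ} {s : Set ℝ} (hs : ∀ x ∈ s, cos (θ - x) ≠ 0) :
    ContinuousOn (fun x => tan (θ - x)) s :=
  continuousOn_tan.comp (by fun_prop) hs

theorem continuousOn_gBEM {θ : ℝ} {μD : ℝ → ℝ} {s : Set ℝ} (hμD : ContinuousOn μD s)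
    (hsin : ∀ x ∈ s, sin x ≠ 0) (hcos : ∀ x ∈ s, cos (θ - x) ≠ 0) :
    ContinuousOn (gBEM θ μD) s := by
  have hcot : ContinuousOn (fun x => cos x / sin x) s :=
    continuous_cos.continuousOn.div continuous_sin.continuousOn hsin
  have htan := continuousOn_tan_const_sub hcos
  exact (hcot.mul htan).add ((hμD.div continuous_sin.continuousOn hsin).mul
    (continuousOn_const.add (hcot.mul htan)))

theorem continuousOn_muGc {θ ac : ℝ} {ψ τ : ℝ → ℝ} {s : Set ℝ} (hψ : ContinuousOn ψ (Ici 0))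
    (hτ : ContinuousOn τ s) (hτ1 : ∀ x ∈ s, τ x < 1) (hcos : ∀ x ∈ s, cos (θ - x) ≠ 0) :
    ContinuousOn (muGc θ ψ ac τ) s := by
  have hψτ : ContinuousOn (fun x => ψ (max (τ x - ac) 0)) s :=
    hψ.comp ((hτ.sub continuousOn_const).sup continuousOn_const) fun _ _ =>
      mem_Ici.2 (le_max_right _ _)
  refine (continuous_sin.continuousOn.mul (continuousOn_tan_const_sub hcos)).add
    ((((by fun_prop : Continuous fun x => cos θ * sin x ^ 2).continuousOn.div
      (by fun_prop) hcos).mul hψτ).div ((continuousOn_const.sub hτ).pow 2) fun x hx => ?_)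
  exact pow_ne_zero 2 (sub_ne_zero.2 (hτ1 x hx).ne')

theorem continuousOn_EBEM_root {θ ac : ℝ} {μD ψ τ : ℝ → ℝ} {s : Set ℝ} (hθ : 0 < sin θ)
    (hsin : ∀ x ∈ s, 0 < sin x) (hcos : ∀ x ∈ s, 0 < cos (θ - x)) (hμD : ContinuousOn μD s)
    (hψmono : MonotoneOn ψ (Ici 0)) (hψnn : ∀ x ∈ Ici (0 : ℝ), 0 ≤ ψ x)
    (hτ : ∀ x ∈ s, τ x ∈ Ico (0 : ℝ) 1 ∧ EBEM θ μD ψ ac x (τ x)) :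
    ContinuousOn τ s := by
  have hcoef : ContinuousOn (fun x => sin θ * sin x / cos (θ - x)) s :=
    (by fun_prop : Continuous fun x => sin θ * sin x).continuousOn.div (by fun_prop)
      fun x hx => (hcos x hx).ne'
  have hcoef_nonneg : ∀ x ∈ s, 0 ≤ sin θ * sin x / cos (θ - x) := fun x hx =>
    (div_pos (mul_pos hθ (hsin x hx)) (hcos x hx)).le
  exact fun x hx => continuousWithinAt_of_strictMonoOn_apply_eq (g := gBEM θ μD) ordConnected_Ico
    (fun y hy => strictMonoOn_bemLhs (hcoef_nonneg y hy) hψmono hψnn ac)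
    (fun y hy => (hτ y hy).1) (fun y hy => (hτ y hy).2)
    (fun a _ => (((hcoef.mul continuousOn_const).div_const _).const_add _) x hx)
    (continuousOn_gBEM hμD (fun y hy => (hsin y hy).ne') (fun y hy => (hcos y hy).ne') x hx) hx

theorem sin_mul_tan_le_muGc {θ ac φ : ℝ} {ψ τ : ℝ → ℝ} (hθ : 0 ≤ cos θ) (hφ : 0 ≤ cos (θ - φ))
    (hψ : 0 ≤ ψ (max (τ φ - ac) 0)) : sin φ * tan (θ - φ) ≤ muGc θ ψ ac τ φ :=
  le_add_of_nonneg_right (by positivity)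

theorem bem_corrected_bracketing_general
    (θ m : ℝ) (hθ : θ ∈ Ioo 0 (π / 2))
    (hm : m ∈ Ioc 0 θ)
    (μL : ℝ → ℝ) (hμLc : ContinuousOn μL (Ioc 0 m))
    (μD : ℝ → ℝ) (hμDc : ContinuousOn μD (Icc 0 m))
    (ac : ℝ)
    (ψ : ℝ → ℝ) (hψc : ContinuousOn ψ (Ici 0)) (hψmono : MonotoneOn ψ (Ici 0))
    (hψnn : ∀ x ∈ Ici (0 : ℝ), 0 ≤ ψ x)
    (τ : ℝ → ℝ)
    (hτ : ∀ φ ∈ Ioc 0 m, τ φ ∈ Ico (0 : ℝ) 1 ∧ EBEM θ μD ψ ac φ (τ φ))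
    (hbdry : muGc θ ψ ac τ m ≤ μL m - Real.tan (θ - m) * μD m)
    (φ₀ : ℝ) (hφ₀ : φ₀ ∈ Ioc 0 m)
    (h₀ : μL φ₀ - Real.tan (θ - φ₀) * μD φ₀ = Real.sin φ₀ * Real.tan (θ - φ₀)) :
    ∃ φ ∈ Icc φ₀ m,
      μL φ - Real.tan (θ - φ) * μD φ = muGc θ ψ ac τ φ := by
  have hsm : Icc φ₀ m ⊆ Ioc 0 m := fun x hx => ⟨hφ₀.1.trans_le hx.1, hx.2⟩
  have hsθ : Icc φ₀ m ⊆ Ioc 0 θ := fun x hx => ⟨(hsm hx).1, hx.2.trans hm.2⟩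
  have hsin : ∀ x ∈ Icc φ₀ m, 0 < sin x := fun x hx => sin_pos_of_mem_Ioc hθ.2 (hsθ hx)
  have hcos : ∀ x ∈ Icc φ₀ m, 0 < cos (θ - x) := fun x hx => cos_sub_pos_of_mem_Ioc hθ.2 (hsθ hx)
  have hμD : ContinuousOn μD (Icc φ₀ m) := hμDc.mono fun y hy => Ioc_subset_Icc_self (hsm hy)
  have hτc : ContinuousOn τ (Icc φ₀ m) :=
    continuousOn_EBEM_root (sin_pos_of_mem_Ioc hθ.2 ⟨hθ.1, le_rfl⟩) hsin hcos hμD hψmono hψnn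
      fun y hy => hτ y (hsm hy)
  have hF : ContinuousOn (fun x => μL x - tan (θ - x) * μD x - muGc θ ψ ac τ x) (Icc φ₀ m) :=
    ((hμLc.mono hsm).sub ((continuousOn_tan_const_sub fun y hy => (hcos y hy).ne').mul hμD)).sub
      (continuousOn_muGc hψc hτc (fun y hy => (hτ y (hsm hy)).1.2) fun y hy => (hcos y hy).ne')
  have hF₀ : sin φ₀ * tan (θ - φ₀) ≤ muGc θ ψ ac τ φ₀ :=
    sin_mul_tan_le_muGc (cos_pos_of_mem_Ioo ⟨by linarith [hθ.1, pi_pos], hθ.2⟩).le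
      (hcos φ₀ ⟨le_rfl, hφ₀.2⟩).le (hψnn _ (mem_Ici.2 (le_max_right _ _)))
  obtain ⟨φ, hφ, hφ0⟩ := intermediate_value_Icc hφ₀.2 hF
    (show (0 : ℝ) ∈ Icc _ _ from ⟨by linarith, by linarith⟩)
  exact ⟨φ, hφ, sub_eq_zero.1 hφ0⟩

/-- Bracketing: a solution `φ₀` of the uncorrected equation
`μ_L(φ₀) − tan(θ−φ₀)·μ_D(φ₀) = μ_G(φ₀)` yields a solution of the corrected equation
`μ_L(φ) − tan(θ−φ)·μ_D(φ) = μ_G^c(φ)` in `[φ₀, m]`, provided the boundary condition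
`μ_G^c(m) ≤ μ_L(m) − tan(θ−m)·μ_D(m)` holds. -/
theorem bem_corrected_bracketing
    (lam θ m : ℝ) (hlam : 0 < lam) (hθ : θ ∈ Ioo 0 (π / 2))
    (htan : Real.tan θ = 1 / lam) (hm : m ∈ Ioc 0 θ)
    (μL : ℝ → ℝ) (hμLc : ContinuousOn μL (Ioc 0 m))
    (μD : ℝ → ℝ) (hμDc : ContinuousOn μD (Icc 0 m))
    (hμDnn : ∀ φ ∈ Icc 0 m, 0 ≤ μD φ)
    (ac : ℝ) (hac : ac ∈ Ioo (0 : ℝ) 1)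
    (ψ : ℝ → ℝ) (hψc : ContinuousOn ψ (Ici 0)) (hψmono : MonotoneOn ψ (Ici 0))
    (hψ0 : ψ 0 = 0) (hψnn : ∀ x ∈ Ici (0 : ℝ), 0 ≤ ψ x)
    (τ : ℝ → ℝ)
    (hτ : ∀ φ ∈ Ioc 0 m, τ φ ∈ Ico (0 : ℝ) 1 ∧ EBEM θ μD ψ ac φ (τ φ))
    (hτuniq : ∀ φ ∈ Ioc 0 m, ∀ a ∈ Ico (0 : ℝ) 1, EBEM θ μD ψ ac φ a → a = τ φ)
    (hbdry : muGc θ ψ ac τ m ≤ μL m - Real.tan (θ - m) * μD m)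
    (φ₀ : ℝ) (hφ₀ : φ₀ ∈ Ioc 0 m)
    (h₀ : μL φ₀ - Real.tan (θ - φ₀) * μD φ₀ = Real.sin φ₀ * Real.tan (θ - φ₀)) :
    ∃ φ ∈ Icc φ₀ m,
      μL φ - Real.tan (θ - φ) * μD φ = muGc θ ψ ac τ φ :=
  bem_corrected_bracketing_general θ m hθ hm μL hμLc μD hμDc ac ψ hψc hψmono hψnn τ hτ hbdry φ₀ hφ₀
    h₀
end

section
/- Let λ > 0 with θ_λ ∈ (0, π/2) defined by tan θ_λ = 1/λ, let γ_λ ∈ (0, θ_λ), and let μ_L : [γ_λ, θ_λ] → [0, ∞) be continuous on [γ_λ, θ_λ] and differentiable on (γ_λ, θ_λ), non-negative, non-decreasing, with μ_L(θ_λ) ≤ μ_G(γ_λ). Assume the contraction conditions sin θ_λ · (sup_{(γ_λ,θ_λ)} μ_L') · h(γ_λ) < 1 and sin θ_λ · (sup_{[γ_λ,θ_λ]} μ_L) · |h'(γ_λ)| < 1. Then for every φ⁰ ∈ [γ_λ, θ_λ], the sequence φ^{k+1} = f̃(φ^k) converges to the unique φ ∈ [γ_λ, θ_λ] satisfying μ_L(φ)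 = μ_G(φ). -/
open Real Set

/-- The function `h(x) = (λ cot x + 1)/sin x`. -/
noncomputable def hBEM (lam x : ℝ) : ℝ :=
  (lam * (Real.cos x / Real.sin x) + 1) / Real.sin x

/-- The fixed-point map of the usual BEM algorithm for the simplified model:
`f̃(x) = π/2 − arctan(λ + μ_L(x) h(x))`. -/
noncomputable def fBEM (lam : ℝ) (μL : ℝ → ℝ) (x : ℝ) : ℝ :=
  Real.pi / 2 - Real.arctan (lam + μL x * hBEM lam x)

/-!
Since `tan θ = 1/λ`, we have `λ = cot θ`, and the identity `μ_G(x) h(x) = cot x − cot θ`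
turns the fixed-point equation `f̃(x) = x`, i.e. `λ + μ_L(x) h(x) = cot x`, into
`μ_L(x) = μ_G(x)`. The same identity at `x = γ`, the stability condition and the fact that
`μ_L` increases while `h` decreases show that `f̃` maps `[γ, θ]` into itself.

Write `f̃ = π/2 − arctan ∘ u` with `u = λ + μ_L h ≥ λ`. On `[λ, ∞)` the arctangent is
`(1 + λ²)⁻¹ = sin² θ`-Lipschitz, and `u' = μ_L' h − μ_L |h'|` is a difference of two
non-negative terms bounded by `M₁ h(γ)` and `M₀ |h'(γ)|`, because `h` and `|h'|` decrease on
`(0, π/2)`. The contraction conditions therefore make `f̃` a contraction of `[γ, θ]`, and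
Banach's fixed point theorem gives the unique solution and the convergence of the iteration.
-/

open Filter Topology Function
open scoped NNReal

theorem abs_sub_le_mul_abs_sub_of_abs_deriv_le {f f' : ℝ → ℝ} {a b C : ℝ}
    (hf : ContinuousOn f (Icc a b)) (hf' : ∀ x ∈ Ioo a b, HasDerivAt f (f' x) x)
    (hC : ∀ x ∈ Ioo a b, |f' x| ≤ C) {x y : ℝ} (hx : x ∈ Icc a b) (hy : y ∈ Icc a b) :
    |f x - f y| ≤ C * |x - y| := by
  wlog hxy : x < y generalizing x y
  · rcases (not_lt.1 hxy).eq_or_lt with rfl | hyx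
    · simp
    · rw [abs_sub_comm, abs_sub_comm x]
      exact this hy hx hyx
  have hIoo : Ioo x y ⊆ Ioo a b := Ioo_subset_Ioo hx.1 hy.2
  obtain ⟨c, hc, hslope⟩ := exists_hasDerivAt_eq_slope f f' hxy
    (hf.mono (Icc_subset_Icc hx.1 hy.2)) fun z hz ↦ hf' z (hIoo hz)
  have hyx : 0 < y - x := sub_pos.2 hxy
  rw [abs_sub_comm, abs_sub_comm x, abs_of_pos hyx]
  calc |f y - f x| = |f' c| * (y - x) := by
        rw [hslope, abs_div, abs_of_pos hyx, div_mul_cancel₀ _ hyx.ne']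
    _ ≤ C * (y - x) := by gcongr; exact hC c (hIoo hc)

theorem abs_arctan_sub_arctan_le {a x y : ℝ} (ha : 0 ≤ a) (hx : a ≤ x) (hy : a ≤ y) :
    |arctan x - arctan y| ≤ (1 + a ^ 2)⁻¹ * |x - y| := by
  refine abs_sub_le_mul_abs_sub_of_abs_deriv_le (a := a) (b := max x y)
    continuous_arctan.continuousOn (fun z _ ↦ hasDerivAt_arctan z) (fun z hz ↦ ?_)
    ⟨hx, le_max_left x y⟩ ⟨hy, le_max_right x y⟩
  rw [one_div, abs_of_pos (by positivity)]
  gcongr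
  exact hz.1.le

theorem exists_unique_fixedPoint_of_lipschitzOnWith {α : Type*} [MetricSpace α] {f : α → α}
    {s : Set α} {K : ℝ≥0} (hs : IsComplete s) (hne : s.Nonempty) (hfs : MapsTo f s s)
    (hf : LipschitzOnWith K f s) (hK : K < 1) :
    ∃ p ∈ s, IsFixedPt f p ∧ (∀ x ∈ s, IsFixedPt f x → x = p) ∧
      ∀ u : ℕ → α, u 0 ∈ s → (∀ k, u (k + 1) = f (u k)) → Tendsto u atTop (𝓝 p) := by
  have hc : ContractingWith K (hfs.restrict f s s) := ⟨hK, hf.to_restrict⟩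
  have huniq : ∀ x ∈ s, ∀ y ∈ s, IsFixedPt f x → IsFixedPt f y → x = y := by
    intro x hx y hy hfx hfy
    have hxy := hf.dist_le_mul x hx y hy
    rw [hfx, hfy] at hxy
    exact dist_le_zero.1 (by nlinarith [dist_nonneg (x := x) (y := y), NNReal.coe_lt_one.2 hK])
  obtain ⟨x₀, hx₀⟩ := hne
  set p := ContractingWith.efixedPoint' f hs hfs hc x₀ hx₀ (edist_ne_top _ _)
  have hp : p ∈ s := hc.efixedPoint_mem' hs hfs hx₀ _
  have hfp : IsFixedPt f p := hc.efixedPoint_isFixedPt' hs hfs hx₀ _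
  refine ⟨p, hp, hfp, fun x hx hfx ↦ huniq x hx p hp hfx hfp, fun u hu0 hu ↦ ?_⟩
  have hu_eq : u = fun n ↦ f^[n] (u 0) := funext fun n ↦ by
    induction n with
    | zero => rfl
    | succ n ih => rw [hu, ih, iterate_succ_apply']
  rw [hu_eq, huniq p hp _ (hc.efixedPoint_mem' hs hfs hu0 (edist_ne_top _ _)) hfp
    (hc.efixedPoint_isFixedPt' hs hfs hu0 _)]
  exact hc.tendsto_iterate_efixedPoint' hs hfs hu0 _

section Trigonometry

variable {x y : ℝ}

theorem sin_pos_of_mem_Ioo_pi_div_two (hx : x ∈ Ioo 0 (π / 2)) : 0 < sin x :=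
  sin_pos_of_pos_of_lt_pi hx.1 (hx.2.trans (half_lt_self pi_pos))

theorem cos_pos_of_mem_Ioo_pi_div_two (hx : x ∈ Ioo 0 (π / 2)) : 0 < cos x :=
  cos_pos_of_mem_Ioo ⟨(neg_neg_of_pos (half_pos pi_pos)).trans hx.1, hx.2⟩

theorem sin_le_sin_of_mem_Ioo_pi_div_two (hx : x ∈ Ioo 0 (π / 2)) (hy : y ∈ Ioo 0 (π / 2))
    (hxy : x ≤ y) : sin x ≤ sin y :=
  sin_le_sin_of_le_of_le_pi_div_two (by linarith [hx.1, pi_pos]) hy.2.le hxy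

theorem cos_le_cos_of_mem_Ioo_pi_div_two (hx : x ∈ Ioo 0 (π / 2)) (hy : y ∈ Ioo 0 (π / 2))
    (hxy : x ≤ y) : cos y ≤ cos x :=
  cos_le_cos_of_nonneg_of_le_pi hx.1.le (by linarith [hy.2, pi_pos]) hxy

theorem pi_div_two_sub_arctan_cot (hx : x ∈ Ioo 0 π) : π / 2 - arctan (cos x / sin x) = x := by
  rw [← inv_div (sin x), ← tan_eq_sin_div_cos, ← tan_pi_div_two_sub,
    arctan_tan (by linarith [hx.2]) (by linarith [hx.1]), sub_sub_cancel]

theorem inv_one_add_cot_sq (hx : sin x ≠ 0) : (1 + (cos x / sin x) ^ 2)⁻¹ = sin x ^ 2 := by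
  field_simp
  linear_combination (-1) * sin_sq_add_cos_sq x

end Trigonometry

/-- `-h'`, written as a sum of two terms that both decrease on `(0, π/2)`. -/
noncomputable def hBEMNegDeriv (lam x : ℝ) : ℝ :=
  lam * (1 + cos x ^ 2) / sin x ^ 3 + cos x / sin x ^ 2

theorem hasDerivAt_hBEM (lam : ℝ) {x : ℝ} (hx : sin x ≠ 0) :
    HasDerivAt (hBEM lam) (-hBEMNegDeriv lam x) x := by
  refine ((((hasDerivAt_cos x).fun_div (hasDerivAt_sin x) hx).const_mul lam
    |>.add_const 1).fun_div (hasDerivAt_sin x) hx).congr_deriv ?_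
  rw [hBEMNegDeriv]
  field_simp
  linear_combination (-lam) * sin_sq_add_cos_sq x

section BEM

variable {lam θ γ x : ℝ} {μL : ℝ → ℝ}

theorem hBEM_pos (hlam : 0 ≤ lam) (hx : x ∈ Ioo 0 (π / 2)) : 0 < hBEM lam x := by
  have := sin_pos_of_mem_Ioo_pi_div_two hx
  have := cos_pos_of_mem_Ioo_pi_div_two hx
  unfold hBEM
  positivity

theorem hBEMNegDeriv_nonneg (hlam : 0 ≤ lam) (hx : x ∈ Ioo 0 (π / 2)) :
    0 ≤ hBEMNegDeriv lam x := by
  have := sin_pos_of_mem_Ioo_pi_div_two hx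
  have := cos_pos_of_mem_Ioo_pi_div_two hx
  unfold hBEMNegDeriv
  positivity

theorem antitoneOn_hBEM (hlam : 0 ≤ lam) : AntitoneOn (hBEM lam) (Ioo 0 (π / 2)) := by
  intro x hx y hy hxy
  have := sin_pos_of_mem_Ioo_pi_div_two hx
  have := cos_pos_of_mem_Ioo_pi_div_two hx
  have := cos_pos_of_mem_Ioo_pi_div_two hy
  have := sin_le_sin_of_mem_Ioo_pi_div_two hx hy hxy
  have := cos_le_cos_of_mem_Ioo_pi_div_two hx hy hxy
  unfold hBEM
  gcongr

theorem antitoneOn_hBEMNegDeriv (hlam : 0 ≤ lam) :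
    AntitoneOn (hBEMNegDeriv lam) (Ioo 0 (π / 2)) := by
  intro x hx y hy hxy
  have := sin_pos_of_mem_Ioo_pi_div_two hx
  have := cos_pos_of_mem_Ioo_pi_div_two hx
  have := cos_pos_of_mem_Ioo_pi_div_two hy
  have := sin_le_sin_of_mem_Ioo_pi_div_two hx hy hxy
  have := cos_le_cos_of_mem_Ioo_pi_div_two hx hy hxy
  unfold hBEMNegDeriv
  gcongr

theorem sin_mul_tan_sub_mul_hBEM (hθ : θ ∈ Ioo 0 (π / 2)) (hx : x ∈ Ioo 0 (π / 2)) :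
    sin x * tan (θ - x) * hBEM (cos θ / sin θ) x = cos x / sin x - cos θ / sin θ := by
  have hsθ := sin_pos_of_mem_Ioo_pi_div_two hθ
  have hsx := sin_pos_of_mem_Ioo_pi_div_two hx
  have hc : cos (θ - x) ≠ 0 :=
    (cos_pos_of_mem_Ioo ⟨by linarith [hθ.1, hx.2], by linarith [hθ.2, hx.1]⟩).ne'
  rw [tan_eq_sin_div_cos, hBEM, sin_sub]
  field_simp
  rw [cos_sub]
  ring

theorem fBEM_eq_self_iff (hx : x ∈ Ioo 0 π) :
    fBEM lam μL x = x ↔ lam + μL x * hBEM lam x = cos x / sin x := by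
  rw [fBEM]
  constructor
  · intro h
    exact arctan_injective (by linarith [pi_div_two_sub_arctan_cot hx])
  · intro h
    rw [h, pi_div_two_sub_arctan_cot hx]

theorem fBEM_eq_self_iff_eq_sin_mul_tan (hθ : θ ∈ Ioo 0 (π / 2)) (hcot : cos θ / sin θ = lam)
    (hx : x ∈ Ioo 0 (π / 2)) :
    fBEM lam μL x = x ↔ μL x = sin x * tan (θ - x) := by
  subst hcot
  have hlam : 0 ≤ cos θ / sin θ :=
    (div_pos (cos_pos_of_mem_Ioo_pi_div_two hθ) (sin_pos_of_mem_Ioo_pi_div_two hθ)).le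
  rw [fBEM_eq_self_iff ⟨hx.1, hx.2.trans (half_lt_self pi_pos)⟩, ← eq_sub_iff_add_eq',
    ← sin_mul_tan_sub_mul_hBEM hθ hx, mul_left_inj' (hBEM_pos hlam hx).ne', eq_comm]

theorem mapsTo_fBEM (hlam : 0 ≤ lam) (hθ : θ < π / 2) (hγ : γ ∈ Ioo 0 θ)
    (hcot : cos θ / sin θ = lam) (hμLnn : ∀ x ∈ Icc γ θ, 0 ≤ μL x)
    (hμLmono : MonotoneOn μL (Icc γ θ)) (hstab : μL θ ≤ sin γ * tan (θ - γ)) :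
    MapsTo (fBEM lam μL) (Icc γ θ) (Icc γ θ) := by
  have hI : Icc γ θ ⊆ Ioo 0 (π / 2) := Icc_subset_Ioo hγ.1 hθ
  have hIπ : ∀ x ∈ Icc γ θ, x ∈ Ioo 0 π := fun x hx ↦
    ⟨(hI hx).1, (hI hx).2.trans (half_lt_self pi_pos)⟩
  have hγI : γ ∈ Icc γ θ := left_mem_Icc.2 hγ.2.le
  have hθI : θ ∈ Icc γ θ := right_mem_Icc.2 hγ.2.le
  intro x hx
  have hμh : 0 ≤ μL x * hBEM lam x := mul_nonneg (hμLnn x hx) (hBEM_pos hlam (hI hx)).le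
  constructor
  · have hle : μL x * hBEM lam x ≤ sin γ * tan (θ - γ) * hBEM lam γ :=
      mul_le_mul ((hμLmono hx hθI hx.2).trans hstab)
        (antitoneOn_hBEM hlam (hI hγI) (hI hx) hx.1) (hBEM_pos hlam (hI hx)).le
        ((hμLnn θ hθI).trans hstab)
    rw [← hcot, sin_mul_tan_sub_mul_hBEM ⟨hγ.1.trans hγ.2, hθ⟩ (hI hγI), hcot] at hle
    rw [← pi_div_two_sub_arctan_cot (hIπ γ hγI), fBEM]
    gcongr
    linarith
  · rw [← pi_div_two_sub_arctan_cot (hIπ θ hθI), hcot, fBEM]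
    gcongr
    linarith

theorem abs_mul_hBEM_sub_le {μL' : ℝ → ℝ} {M₁ M₀ : ℝ} (hlam : 0 ≤ lam) (hγ : 0 < γ)
    (hθ : θ < π / 2) (hμLc : ContinuousOn μL (Icc γ θ))
    (hμLd : ∀ x ∈ Ioo γ θ, HasDerivAt μL (μL' x) x) (hμLnn : ∀ x ∈ Icc γ θ, 0 ≤ μL x)
    (hμLmono : MonotoneOn μL (Icc γ θ)) (hM₁ : M₁ ∈ upperBounds (μL' '' Ioo γ θ))
    (hM₀ : M₀ ∈ upperBounds (μL '' Icc γ θ)) {x y : ℝ} (hx : x ∈ Icc γ θ) (hy : y ∈ Icc γ θ) :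
    |μL x * hBEM lam x - μL y * hBEM lam y| ≤
      max (M₁ * hBEM lam γ) (M₀ * hBEMNegDeriv lam γ) * |x - y| := by
  have hI : Icc γ θ ⊆ Ioo 0 (π / 2) := Icc_subset_Ioo hγ hθ
  have hγI : γ ∈ Icc γ θ := left_mem_Icc.2 (hx.1.trans hx.2)
  have hh : ∀ z ∈ Icc γ θ, HasDerivAt (hBEM lam) (-hBEMNegDeriv lam z) z := fun z hz ↦
    hasDerivAt_hBEM lam (sin_pos_of_mem_Ioo_pi_div_two (hI hz)).ne'
  refine abs_sub_le_mul_abs_sub_of_abs_deriv_le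
    (hμLc.mul fun z hz ↦ (hh z hz).continuousAt.continuousWithinAt)
    (fun z hz ↦ (hμLd z hz).mul (hh z (Ioo_subset_Icc_self hz))) (fun z hz ↦ ?_) hx hy
  have hzI := Ioo_subset_Icc_self hz
  have hμ'nn : 0 ≤ μL' z := by
    have := (hμLmono.mono Ioo_subset_Icc_self).derivWithin_nonneg (x := z)
    rwa [(hμLd z hz).hasDerivWithinAt.derivWithin (isOpen_Ioo.uniqueDiffWithinAt hz)] at this
  have hμ'_le : μL' z ≤ M₁ := hM₁ (mem_image_of_mem μL' hz)
  have hμ_le : μL z ≤ M₀ := hM₀ (mem_image_of_mem μL hzI)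
  have hinc : μL' z * hBEM lam z ≤ M₁ * hBEM lam γ :=
    mul_le_mul hμ'_le (antitoneOn_hBEM hlam (hI hγI) (hI hzI) hzI.1)
      (hBEM_pos hlam (hI hzI)).le (hμ'nn.trans hμ'_le)
  have hdec : μL z * hBEMNegDeriv lam z ≤ M₀ * hBEMNegDeriv lam γ :=
    mul_le_mul hμ_le (antitoneOn_hBEMNegDeriv hlam (hI hγI) (hI hzI) hzI.1)
      (hBEMNegDeriv_nonneg hlam (hI hzI)) ((hμLnn z hzI).trans hμ_le)
  rw [mul_neg, ← sub_eq_add_neg]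
  exact abs_sub_le_of_nonneg_of_le (mul_nonneg hμ'nn (hBEM_pos hlam (hI hzI)).le)
    (hinc.trans (le_max_left _ _)) (mul_nonneg (hμLnn z hzI) (hBEMNegDeriv_nonneg hlam (hI hzI)))
    (hdec.trans (le_max_right _ _))

theorem lipschitzOnWith_fBEM {μL' : ℝ → ℝ} {M₁ M₀ : ℝ} (hlam : 0 ≤ lam) (hγ : 0 < γ)
    (hθ : θ < π / 2) (hμLc : ContinuousOn μL (Icc γ θ))
    (hμLd : ∀ x ∈ Ioo γ θ, HasDerivAt μL (μL' x) x) (hμLnn : ∀ x ∈ Icc γ θ, 0 ≤ μL x)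
    (hμLmono : MonotoneOn μL (Icc γ θ)) (hM₁ : M₁ ∈ upperBounds (μL' '' Ioo γ θ))
    (hM₀ : M₀ ∈ upperBounds (μL '' Icc γ θ)) :
    LipschitzOnWith ((1 + lam ^ 2)⁻¹ * max (M₁ * hBEM lam γ) (M₀ * hBEMNegDeriv lam γ)).toNNReal
      (fBEM lam μL) (Icc γ θ) := by
  have hI : Icc γ θ ⊆ Ioo 0 (π / 2) := Icc_subset_Ioo hγ hθ
  have hu : ∀ x ∈ Icc γ θ, lam ≤ lam + μL x * hBEM lam x := fun x hx ↦
    le_add_of_nonneg_right (mul_nonneg (hμLnn x hx) (hBEM_pos hlam (hI hx)).le)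
  refine LipschitzOnWith.of_dist_le' fun x hx y hy ↦ ?_
  rw [dist_eq, dist_eq, fBEM, fBEM, sub_sub_sub_cancel_left, mul_assoc]
  calc _ ≤ (1 + lam ^ 2)⁻¹ * |μL y * hBEM lam y - μL x * hBEM lam x| := by
        simpa only [add_sub_add_left_eq_sub] using
          abs_arctan_sub_arctan_le hlam (hu y hy) (hu x hx)
    _ ≤ _ := by
        rw [abs_sub_comm]
        gcongr
        exact abs_mul_hBEM_sub_le hlam hγ hθ hμLc hμLd hμLnn hμLmono hM₁ hM₀ hx hy

end BEM

/-- Conditional convergence of the usual BEM fixed-point iteration: under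
the stability condition `μ_L(θ_λ) ≤ μ_G(γ_λ)` and the contraction conditions
`sin θ_λ · (sup μ_L') · h(γ_λ) < 1` and `sin θ_λ · (sup μ_L) · |h'(γ_λ)| < 1`, the iteration
`φ^{k+1} = f̃(φ^k)` converges, from any `φ⁰ ∈ [γ_λ, θ_λ]`, to the unique solution of
`μ_L(φ) = μ_G(φ)` in `[γ_λ, θ_λ]`. -/
theorem bem_usual_iteration_convergence
    (lam θ γ : ℝ) (hlam : 0 < lam) (hθ : θ ∈ Ioo 0 (π / 2))
    (htan : Real.tan θ = 1 / lam) (hγ : γ ∈ Ioo 0 θ)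
    (μL μL' : ℝ → ℝ)
    (hμLc : ContinuousOn μL (Icc γ θ))
    (hμLd : ∀ x ∈ Ioo γ θ, HasDerivAt μL (μL' x) x)
    (hμLnn : ∀ x ∈ Icc γ θ, 0 ≤ μL x)
    (hμLmono : MonotoneOn μL (Icc γ θ))
    (hstab : μL θ ≤ Real.sin γ * Real.tan (θ - γ))
    (M₁ M₀ : ℝ)
    (hM₁ : IsLUB (μL' '' Ioo γ θ) M₁)
    (hM₀ : IsLUB (μL '' Icc γ θ) M₀)
    (hcontract1 : Real.sin θ * M₁ * hBEM lam γ < 1)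
    (hcontract2 : Real.sin θ * M₀ * |deriv (hBEM lam) γ| < 1) :
    ∃ φs ∈ Icc γ θ,
      μL φs = Real.sin φs * Real.tan (θ - φs) ∧
      (∀ x ∈ Icc γ θ, μL x = Real.sin x * Real.tan (θ - x) → x = φs) ∧
      ∀ seq : ℕ → ℝ, seq 0 ∈ Icc γ θ →
        (∀ k : ℕ, seq (k + 1) = fBEM lam μL (seq k)) →
        Filter.Tendsto seq Filter.atTop (nhds φs) := by
  have hcot : cos θ / sin θ = lam := by
    rw [← inv_div, ← tan_eq_sin_div_cos, htan, one_div, inv_inv]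
  have hI : Icc γ θ ⊆ Ioo 0 (π / 2) := Icc_subset_Ioo hγ.1 hθ.2
  have hγI : γ ∈ Icc γ θ := left_mem_Icc.2 hγ.2.le
  have hsθ := sin_pos_of_mem_Ioo_pi_div_two hθ
  have hderiv : |deriv (hBEM lam) γ| = hBEMNegDeriv lam γ := by
    rw [(hasDerivAt_hBEM lam (sin_pos_of_mem_Ioo_pi_div_two (hI hγI)).ne').deriv, abs_neg,
      abs_of_nonneg (hBEMNegDeriv_nonneg hlam.le (hI hγI))]
  have hK : (1 + lam ^ 2)⁻¹ * max (M₁ * hBEM lam γ) (M₀ * hBEMNegDeriv lam γ) < 1 := by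
    have h : sin θ * max (M₁ * hBEM lam γ) (M₀ * hBEMNegDeriv lam γ) < 1 := by
      rw [mul_max_of_nonneg _ _ hsθ.le, ← mul_assoc, ← mul_assoc, ← hderiv]
      exact max_lt hcontract1 hcontract2
    have hsq : (1 + lam ^ 2)⁻¹ = sin θ ^ 2 := by rw [← hcot, inv_one_add_cot_sq hsθ.ne']
    rw [hsq]
    nlinarith [sin_le_one θ]
  obtain ⟨φs, hφs, hfix, huniq, hconv⟩ := exists_unique_fixedPoint_of_lipschitzOnWith
    isClosed_Icc.isComplete ⟨γ, hγI⟩ (mapsTo_fBEM hlam.le hθ.2 hγ hcot hμLnn hμLmono hstab)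
    (lipschitzOnWith_fBEM hlam.le hγ.1 hθ.2 hμLc hμLd hμLnn hμLmono hM₁.1 hM₀.1)
    (Real.toNNReal_lt_one.2 hK)
  have hsol : ∀ x ∈ Icc γ θ, fBEM lam μL x = x ↔ μL x = sin x * tan (θ - x) := fun x hx ↦
    fBEM_eq_self_iff_eq_sin_mul_tan hθ hcot (hI hx)
  exact ⟨φs, hφs, (hsol φs hφs).1 hfix, fun x hx hx' ↦ huniq x hx ((hsol x hx).2 hx'), hconv⟩
end
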